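/- arXiv:1809.00179 — 2 statements merged into one kernel-verified Lean document; each statement's English description precedes it below -/
import Mathlib

section
/- Every closed-world dependency is relativizable. That is, if D is a dependency such that for all M and all relations R over M, ⟨M,R⟩ ∈ D iff ⟨M',R⟩ ∈ D where M' = {m ∈ M : m occurs in some tuple of R}, then for every unary relation symbol P the relativized atom D^P is definable in FO(D); in fact D^P v is equivalent to (⋀_{vᵢ ∈ v} P vᵢ) ∧ D v. -/
/-! # A framework for lax team semantics (Galliani-style)

Signatures, structures, terms, NNF formulas of `FO(𝒟)` with dependency atoms,
lax team semantics, Tarskian semantics for first-order formulas, and the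
notions of dependency used in the paper. -/

/-- A first-order signature: function and relation symbols of each arity. -/
structure Sig : Type 1 where
  Func : ℕ → Type
  Rel : ℕ → Type

/-- A structure for the signature `σ` with domain `M`. -/
structure Struc (σ : Sig) (M : Type) : Type where
  fn : ∀ n, σ.Func n → (Fin n → M) → M
  rel : ∀ n, σ.Rel n → (Fin n → M) → Prop

/-- Terms over `σ`, with variables indexed by `ℕ`. -/
inductive Tm (σ : Sig) : Type where
  | var : ℕ → Tm σ
  | app : ∀ n, σ.Func n → (Fin n → Tm σ) → Tm σ

def Tm.eval {σ : Sig} {M : Type} (𝔐 : Struc σ M) (s : ℕ → M) : Tm σ → M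
  | .var v => s v
  | .app n f ts => 𝔐.fn n f fun i => (ts i).eval 𝔐 s

def Tm.vars {σ : Sig} : Tm σ → Set ℕ
  | .var v => {v}
  | .app _ _ ts => ⋃ i, (ts i).vars

/-- A `k`-ary dependency notion: a class of `k`-ary relations over every domain. -/
def DepOn (k : ℕ) : Type 1 :=
  ∀ M : Type, Set (Fin k → M) → Prop

/-- Closure under isomorphisms (part of the definition of a dependency). -/
def DepOn.IsoClosed {k : ℕ} (D : DepOn k) : Prop :=
  ∀ (M N : Type) (e : M ≃ N) (R : Set (Fin k → M)),
    D M R → D N ((fun xs => (⇑e) ∘ xs) '' R)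

/-- Downwards closure. -/
def DepOn.DownClosed {k : ℕ} (D : DepOn k) : Prop :=
  ∀ (M : Type) (R Q : Set (Fin k → M)), D M R → Q ⊆ R → D M Q

/-- Union closure. -/
def DepOn.UnionClosed {k : ℕ} (D : DepOn k) : Prop :=
  ∀ (M : Type) (I : Type) (Rf : I → Set (Fin k → M)),
    (∀ j, D M (Rf j)) → D M (⋃ j, Rf j)

/-- The empty team property. -/
def DepOn.EmptyTeamProp {k : ℕ} (D : DepOn k) : Prop :=
  ∀ M : Type, D M (∅ : Set (Fin k → M))

/-- Closed-world dependencies: only the elements occurring in tuples of `R` matter. -/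
def DepOn.ClosedWorld {k : ℕ} (D : DepOn k) : Prop :=
  ∀ (M : Type) (R : Set (Fin k → M)),
    D M R ↔ D {m : M // ∃ xs ∈ R, ∃ i, xs i = m} {xs | (fun i => (xs i : M)) ∈ R}

/-- Negation normal form formulas of `FO(𝒟)`: first-order literals, dependency
atoms indexed by `ι` (with arities `ar`), conjunction, disjunction, quantifiers. -/
inductive Fml (σ : Sig) (ι : Type) (ar : ι → ℕ) : Type where
  | eq : Tm σ → Tm σ → Fml σ ι ar
  | neq : Tm σ → Tm σ → Fml σ ι ar
  | rel : ∀ n, σ.Rel n → (Fin n → Tm σ) → Fml σ ι ar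
  | nrel : ∀ n, σ.Rel n → (Fin n → Tm σ) → Fml σ ι ar
  | dep : ∀ i : ι, (Fin (ar i) → Tm σ) → Fml σ ι ar
  | and : Fml σ ι ar → Fml σ ι ar → Fml σ ι ar
  | or : Fml σ ι ar → Fml σ ι ar → Fml σ ι ar
  | ex : ℕ → Fml σ ι ar → Fml σ ι ar
  | all : ℕ → Fml σ ι ar → Fml σ ι ar

namespace Fml
variable {σ : Sig} {ι : Type} {ar : ι → ℕ}

/-- Free variables of a formula. -/
def free : Fml σ ι ar → Set ℕ
  | .eq t u => t.vars ∪ u.vars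
  | .neq t u => t.vars ∪ u.vars
  | .rel _ _ ts => ⋃ i, (ts i).vars
  | .nrel _ _ ts => ⋃ i, (ts i).vars
  | .dep _ ts => ⋃ i, (ts i).vars
  | .and φ ψ => φ.free ∪ ψ.free
  | .or φ ψ => φ.free ∪ ψ.free
  | .ex v φ => φ.free \ {v}
  | .all v φ => φ.free \ {v}

/-- The relation symbols occurring in negated literals of a formula. -/
def negRels : Fml σ ι ar → Set (Σ n, σ.Rel n)
  | .eq _ _ => ∅
  | .neq _ _ => ∅
  | .rel _ _ _ => ∅
  | .nrel n R _ => {⟨n, R⟩}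
  | .dep _ _ => ∅
  | .and φ ψ => φ.negRels ∪ ψ.negRels
  | .or φ ψ => φ.negRels ∪ ψ.negRels
  | .ex _ φ => φ.negRels
  | .all _ φ => φ.negRels

open Classical in
/-- The number of occurrences (positive or negative) of a relation symbol. -/
noncomputable def countRel (S : Σ n, σ.Rel n) : Fml σ ι ar → ℕ
  | .eq _ _ => 0
  | .neq _ _ => 0
  | .rel n R _ => if (⟨n, R⟩ : Σ n, σ.Rel n) = S then 1 else 0
  | .nrel n R _ => if (⟨n, R⟩ : Σ n, σ.Rel n) = S then 1 else 0
  | .dep _ _ => 0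
  | .and φ ψ => countRel S φ + countRel S ψ
  | .or φ ψ => countRel S φ + countRel S ψ
  | .ex _ φ => countRel S φ
  | .all _ φ => countRel S φ

/-- Quantifier-free formulas. -/
def QFree : Fml σ ι ar → Prop
  | .and φ ψ => QFree φ ∧ QFree ψ
  | .or φ ψ => QFree φ ∧ QFree ψ
  | .ex _ _ => False
  | .all _ _ => False
  | _ => True

end Fml

/-- A team: a set of assignments. -/
abbrev Team (M : Type) := Set (ℕ → M)

/-- Lax supplementation `X[H/v]`. -/
def teamSupp {M : Type} (X : Team M) (H : (ℕ → M) → Set M) (v : ℕ) : Team M :=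
  {s' | ∃ s ∈ X, ∃ m ∈ H s, s' = Function.update s v m}

/-- Duplication `X[M/v]`. -/
def teamDup {M : Type} (X : Team M) (v : ℕ) : Team M :=
  teamSupp X (fun _ => Set.univ) v

/-- Simultaneous update of an assignment on a tuple of variables. -/
def updVec {M : Type} (s : ℕ → M) {l : ℕ} (vs : Fin l → ℕ) (m : Fin l → M) : ℕ → M :=
  (List.finRange l).foldr (fun j t => Function.update t (vs j) (m j)) s

/-- Lax supplementation along a tuple of variables. -/
def teamSuppVec {M : Type} (X : Team M) {l : ℕ} (H : (ℕ → M) → Set (Fin l → M))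
    (vs : Fin l → ℕ) : Team M :=
  {s' | ∃ s ∈ X, ∃ m ∈ H s, s' = updVec s vs m}

/-- Restriction `X↾V` of a team to a set of variables. -/
def teamRestrict {M : Type} (X : Team M) (V : Set ℕ) : Set (V → M) :=
  (fun s (v : V) => s v.1) '' X

/-- `X(t)`: the relation of the values of the tuple of terms `t` in the team `X`. -/
def teamVals {σ : Sig} {M : Type} (𝔐 : Struc σ M) (X : Team M) {k : ℕ}
    (t : Fin k → Tm σ) : Set (Fin k → M) :=
  {xs | ∃ s ∈ X, xs = fun i => (t i).eval 𝔐 s}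

/-- `X↾(v = w)(v)`: the relation encoded in `X` by the pair of variable tuples `v`, `w`. -/
def pairRel {M : Type} (Y : Team M) {k : ℕ} (v w : Fin k → ℕ) : Set (Fin k → M) :=
  {xs | ∃ s ∈ Y, (∀ j, xs j = s (v j)) ∧ ∀ j, s (v j) = s (w j)}

/-- Lax team semantics for `FO(𝒟)`. -/
def Fml.TSat {σ : Sig} {ι : Type} {ar : ι → ℕ} (𝒟 : ∀ i, DepOn (ar i)) {M : Type}
    (𝔐 : Struc σ M) : Fml σ ι ar → Team M → Prop
  | .eq t u, X => ∀ s ∈ X, t.eval 𝔐 s = u.eval 𝔐 s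
  | .neq t u, X => ∀ s ∈ X, t.eval 𝔐 s ≠ u.eval 𝔐 s
  | .rel n R ts, X => ∀ s ∈ X, 𝔐.rel n R fun i => (ts i).eval 𝔐 s
  | .nrel n R ts, X => ∀ s ∈ X, ¬ 𝔐.rel n R fun i => (ts i).eval 𝔐 s
  | .dep i ts, X => 𝒟 i M (teamVals 𝔐 X ts)
  | .and φ ψ, X => Fml.TSat 𝒟 𝔐 φ X ∧ Fml.TSat 𝒟 𝔐 ψ X
  | .or φ ψ, X => ∃ Y Z : Team M, X = Y ∪ Z ∧ Fml.TSat 𝒟 𝔐 φ Y ∧ Fml.TSat 𝒟 𝔐 ψ Z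
  | .ex v φ, X => ∃ H : (ℕ → M) → Set M, (∀ s ∈ X, (H s).Nonempty) ∧
      Fml.TSat 𝒟 𝔐 φ (teamSupp X H v)
  | .all v φ, X => Fml.TSat 𝒟 𝔐 φ (teamDup X v)

/-- The arity function of the empty dependency family. -/
abbrev noDep : Empty → ℕ := fun i => i.elim

/-- Pure first-order formulas: no dependency atoms. -/
abbrev FOFml (σ : Sig) := Fml σ Empty noDep

/-- The empty dependency family. -/
def noDepFam : ∀ i : Empty, DepOn (noDep i) := fun i => i.elim

/-- Tarskian satisfaction for first-order formulas. -/
def FOSat {σ : Sig} {M : Type} (𝔐 : Struc σ M) : (ℕ → M) → FOFml σ → Prop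
  | s, .eq t u => t.eval 𝔐 s = u.eval 𝔐 s
  | s, .neq t u => t.eval 𝔐 s ≠ u.eval 𝔐 s
  | s, .rel n R ts => 𝔐.rel n R fun i => (ts i).eval 𝔐 s
  | s, .nrel n R ts => ¬ 𝔐.rel n R fun i => (ts i).eval 𝔐 s
  | _, .dep i _ => i.elim
  | s, .and φ ψ => FOSat 𝔐 s φ ∧ FOSat 𝔐 s ψ
  | s, .or φ ψ => FOSat 𝔐 s φ ∨ FOSat 𝔐 s ψ
  | s, .ex v φ => ∃ m : M, FOSat 𝔐 (Function.update s v m) φ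
  | s, .all v φ => ∀ m : M, FOSat 𝔐 (Function.update s v m) φ

/-- Truth of a sentence of `FO(𝒟)` in a model, via the singleton team. -/
def STrue {σ : Sig} {ι : Type} {ar : ι → ℕ} (𝒟 : ∀ i, DepOn (ar i)) {M : Type}
    (𝔐 : Struc σ M) (φ : Fml σ ι ar) : Prop :=
  ∀ s : ℕ → M, Fml.TSat 𝒟 𝔐 φ {s}

/-- Tarskian truth of a first-order sentence. -/
def FOTrue {σ : Sig} {M : Type} (𝔐 : Struc σ M) (φ : FOFml σ) : Prop :=
  ∀ s : ℕ → M, FOSat 𝔐 s φ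

open Classical in
/-- The structure `𝔐[Q/R]`: change the interpretation of `R` to `Q`. -/
noncomputable def Struc.updRel {σ : Sig} {M : Type} (𝔐 : Struc σ M) {k : ℕ} (R : σ.Rel k)
    (Q : Set (Fin k → M)) : Struc σ M where
  fn := 𝔐.fn
  rel := fun n S xs =>
    if h : (⟨n, S⟩ : Σ n, σ.Rel n) = ⟨k, R⟩ then
      (fun i => xs (Fin.cast (congrArg Sigma.fst h).symm i)) ∈ Q
    else 𝔐.rel n S xs

/-- Extend a signature by `n` new relation symbols of arities `a`. -/
def Sig.addRels (σ : Sig) (n : ℕ) (a : Fin n → ℕ) : Sig where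
  Func := σ.Func
  Rel := fun m => σ.Rel m ⊕ {i : Fin n // a i = m}

/-- Lift a term to an extended signature. -/
def Tm.liftR {σ : Sig} {n : ℕ} {a : Fin n → ℕ} : Tm σ → Tm (σ.addRels n a)
  | .var v => .var v
  | .app m f ts => .app m f fun i => (ts i).liftR

/-- Interpret the new relation symbols by the relations `Q`. -/
def Struc.withRels {σ : Sig} {M : Type} (𝔐 : Struc σ M) {n : ℕ} {a : Fin n → ℕ}
    (Q : ∀ i, Set (Fin (a i) → M)) : Struc (σ.addRels n a) M where
  fn := 𝔐.fn
  rel := fun m S xs =>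
    match S with
    | Sum.inl T => 𝔐.rel m T xs
    | Sum.inr i => (fun j => xs (Fin.cast i.2 j)) ∈ Q i.1

/-- The signature `{R}` with a single `k`-ary relation symbol. -/
def relSig (k : ℕ) : Sig where
  Func := fun _ => Empty
  Rel := fun n => PLift (n = k)

/-- The structure `⟨M, R⟩` over the signature `{R}`. -/
def relStruc (k : ℕ) {M : Type} (R : Set (Fin k → M)) : Struc (relSig k) M where
  fn := fun _ f => f.elim
  rel := fun _ S xs => (fun i => xs (Fin.cast S.down.symm i)) ∈ R

/-- The empty signature. -/
def emptySig : Sig where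
  Func := fun _ => Empty
  Rel := fun _ => Empty

/-- The unique structure over the empty signature with domain `M`. -/
def emptyStruc (M : Type) : Struc emptySig M where
  fn := fun _ f => f.elim
  rel := fun _ r => r.elim

/-- A dependency is first order if it is defined by a first-order sentence `φ(R)`. -/
def FirstOrderDep {k : ℕ} (D : DepOn k) : Prop :=
  ∃ φ : FOFml (relSig k), φ.free = ∅ ∧
    ∀ (M : Type), Nonempty M → ∀ R : Set (Fin k → M), (D M R ↔ FOTrue (relStruc k R) φ)

/-- A family of dependencies is strongly first order if every sentence of `FO(𝒟)`
(over any signature) is equivalent to some first-order sentence. -/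
def StronglyFO {ι : Type} {ar : ι → ℕ} (𝒟 : ∀ i, DepOn (ar i)) : Prop :=
  ∀ (σ : Sig) (φ : Fml σ ι ar), φ.free = ∅ →
    ∃ ψ : FOFml σ, ψ.free = ∅ ∧
      ∀ (M : Type) (𝔐 : Struc σ M), STrue 𝒟 𝔐 φ ↔ FOTrue 𝔐 ψ

/-- A single dependency is strongly first order. -/
def DepOn.StronglyFO1 {k : ℕ} (D : DepOn k) : Prop :=
  StronglyFO (ι := Unit) (ar := fun _ => k) fun _ => D

/-- `D_max`: the relations satisfying `D` that are maximal among those satisfying `D`. -/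
def Dmax {k : ℕ} (D : DepOn k) : DepOn k :=
  fun M R => D M R ∧ ¬ ∃ S : Set (Fin k → M), R ⊂ S ∧ D M S

/-- The constancy dependency. -/
def constDep : DepOn 1 := fun _ R => R.Subsingleton

/-- A dependency `D` is relativizable if each relativized atom `D^P` is definable
in `FO(D)`. -/
def DepOn.Relativizable {k : ℕ} (D : DepOn k) : Prop :=
  ∀ (σ : Sig) (P : σ.Rel 1) (t : Fin k → Tm σ),
    ∃ φ : Fml σ Unit (fun _ => k),
      ∀ (M : Type) (𝔐 : Struc σ M) (X : Team M),
        Fml.TSat (fun _ => D) 𝔐 φ X ↔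
          ((∀ s ∈ X, ∀ i, 𝔐.rel 1 P fun _ => (t i).eval 𝔐 s) ∧
            D {m : M // 𝔐.rel 1 P fun _ => m}
              {xs | ∃ s ∈ X, (fun i => (xs i : M)) = fun i => (t i).eval 𝔐 s})

/-- The union of two dependency families. -/
def sumFam {ιS ιD : Type} {arS : ιS → ℕ} {arD : ιD → ℕ}
    (𝒮 : ∀ i, DepOn (arS i)) (𝒟 : ∀ i, DepOn (arD i)) :
    ∀ i : ιS ⊕ ιD, DepOn (Sum.elim arS arD i)
  | .inl i => 𝒮 i
  | .inr i => 𝒟 i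

/-- The always-true formula. -/
def Fml.verum {σ : Sig} {ι : Type} {ar : ι → ℕ} : Fml σ ι ar := .eq (.var 0) (.var 0)

/-- The formula satisfied only by the empty team. -/
def Fml.falsum {σ : Sig} {ι : Type} {ar : ι → ℕ} : Fml σ ι ar := .neq (.var 0) (.var 0)

/-- Finite conjunction. -/
def bigAndL {σ : Sig} {ι : Type} {ar : ι → ℕ} (l : List (Fml σ ι ar)) : Fml σ ι ar :=
  l.foldr Fml.and Fml.verum

/-- Finite disjunction. -/
def bigOrL {σ : Sig} {ι : Type} {ar : ι → ℕ} (l : List (Fml σ ι ar)) : Fml σ ι ar :=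
  l.foldr Fml.or Fml.falsum

/-- Equality of two variables. -/
def veq {σ : Sig} {ι : Type} {ar : ι → ℕ} (a b : ℕ) : Fml σ ι ar := .eq (.var a) (.var b)

/-- Inequality of two variables. -/
def vne {σ : Sig} {ι : Type} {ar : ι → ℕ} (a b : ℕ) : Fml σ ι ar := .neq (.var a) (.var b)

/-- Universal quantification over a list of variables. -/
def alls {σ : Sig} {ι : Type} {ar : ι → ℕ} (vs : List ℕ) (φ : Fml σ ι ar) : Fml σ ι ar :=
  vs.foldr Fml.all φ

/-- Existential quantification over a list of variables. -/
def exs {σ : Sig} {ι : Type} {ar : ι → ℕ} (vs : List ℕ) (φ : Fml σ ι ar) : Fml σ ι ar :=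
  vs.foldr Fml.ex φ
/-- Replacement of a single occurrence of the dependency atom `dep i₀ t` by the
first-order atom `rel S t`. -/
inductive ReplOne {σ : Sig} {ι : Type} {ar : ι → ℕ} (i₀ : ι) (S : σ.Rel (ar i₀)) :
    Fml σ ι ar → Fml σ ι ar → Prop
  | atom (t : Fin (ar i₀) → Tm σ) : ReplOne i₀ S (.dep i₀ t) (.rel (ar i₀) S t)
  | andL {φ φ' ψ} : ReplOne i₀ S φ φ' → ReplOne i₀ S (.and φ ψ) (.and φ' ψ)
  | andR {φ ψ ψ'} : ReplOne i₀ S ψ ψ' → ReplOne i₀ S (.and φ ψ) (.and φ ψ')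
  | orL {φ φ' ψ} : ReplOne i₀ S φ φ' → ReplOne i₀ S (.or φ ψ) (.or φ' ψ)
  | orR {φ ψ ψ'} : ReplOne i₀ S ψ ψ' → ReplOne i₀ S (.or φ ψ) (.or φ ψ')
  | exC {v φ φ'} : ReplOne i₀ S φ φ' → ReplOne i₀ S (.ex v φ) (.ex v φ')
  | allC {v φ φ'} : ReplOne i₀ S φ φ' → ReplOne i₀ S (.all v φ) (.all v φ')

/-- Replacement of every occurrence of the relation symbol `S` (which may only
occur positively) by one of the `n` new relation symbols of `σ.addRels n (fun _ => k)`. -/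
inductive ReplEach {σ : Sig} {k n : ℕ} (S : σ.Rel k) :
    FOFml σ → FOFml (σ.addRels n fun _ => k) → Prop
  | eqC (t u : Tm σ) : ReplEach S (.eq t u) (.eq t.liftR u.liftR)
  | neqC (t u : Tm σ) : ReplEach S (.neq t u) (.neq t.liftR u.liftR)
  | relS (t : Fin k → Tm σ) (i : Fin n) :
      ReplEach S (.rel k S t) (.rel k (Sum.inr ⟨i, rfl⟩) fun j => (t j).liftR)
  | relO {m : ℕ} (T : σ.Rel m) (t : Fin m → Tm σ)
      (h : (⟨m, T⟩ : Σ n, σ.Rel n) ≠ ⟨k, S⟩) :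
      ReplEach S (.rel m T t) (.rel m (Sum.inl T) fun j => (t j).liftR)
  | nrelO {m : ℕ} (T : σ.Rel m) (t : Fin m → Tm σ)
      (h : (⟨m, T⟩ : Σ n, σ.Rel n) ≠ ⟨k, S⟩) :
      ReplEach S (.nrel m T t) (.nrel m (Sum.inl T) fun j => (t j).liftR)
  | andC {φ φ' ψ ψ'} : ReplEach S φ φ' → ReplEach S ψ ψ' →
      ReplEach S (.and φ ψ) (.and φ' ψ')
  | orC {φ φ' ψ ψ'} : ReplEach S φ φ' → ReplEach S ψ ψ' →
      ReplEach S (.or φ ψ) (.or φ' ψ')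
  | exC {v φ φ'} : ReplEach S φ φ' → ReplEach S (.ex v φ) (.ex v φ')
  | allC {v φ φ'} : ReplEach S φ φ' → ReplEach S (.all v φ) (.all v φ')

/-- Replacement of the unique (positive) occurrence `rel W t` of `W` by the formula
`v = w ∧ t = w`, for tuples `v`, `w` of new variables. -/
inductive ReplW {σ : Sig} {ι : Type} {ar : ι → ℕ} {k : ℕ} (W : σ.Rel k) (v w : Fin k → ℕ) :
    Fml σ ι ar → Fml σ ι ar → Prop
  | atom (t : Fin k → Tm σ) :
      ReplW W v w (.rel k W t)
        (.and (bigAndL ((List.finRange k).map fun j => veq (v j) (w j)))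
              (bigAndL ((List.finRange k).map fun j => Fml.eq (t j) (.var (w j)))))
  | andL {φ φ' ψ} : ReplW W v w φ φ' → ReplW W v w (.and φ ψ) (.and φ' ψ)
  | andR {φ ψ ψ'} : ReplW W v w ψ ψ' → ReplW W v w (.and φ ψ) (.and φ ψ')
  | orL {φ φ' ψ} : ReplW W v w φ φ' → ReplW W v w (.or φ ψ) (.or φ' ψ)
  | orR {φ ψ ψ'} : ReplW W v w ψ ψ' → ReplW W v w (.or φ ψ) (.or φ ψ')

/-- The formula `D_∪(v₁ … vₙ; w₁ … wₙ)` of the paper: it asserts that the union of the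
relations encoded by the pairs `(vᵢ, wᵢ)` satisfies the dependency `i₀`. -/
def depUnion {σ : Sig} {ι : Type} {ar : ι → ℕ} (i₀ : ι) (n : ℕ)
    (v w : Fin n → Fin (ar i₀) → ℕ) (p : Fin n → ℕ) (q : ℕ) (z₀ z₁ : Fin (ar i₀) → ℕ) :
    Fml σ ι ar :=
  let k := ar i₀
  -- the guard `⋁ᵢ q = pᵢ` and its negation
  let guard : Fml σ ι ar := bigOrL ((List.finRange n).map fun i => veq q (p i))
  let nguard : Fml σ ι ar := bigAndL ((List.finRange n).map fun i => vne q (p i))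
  -- the condition `⋀_{j<i} q ≠ pⱼ ∧ q = pᵢ` and its negation
  let cond : Fin n → Fml σ ι ar := fun i =>
    bigAndL ((((List.finRange n).filter fun j => j < i).map fun j => vne q (p j)) ++
      [veq q (p i)])
  let ncond : Fin n → Fml σ ι ar := fun i =>
    bigOrL ((((List.finRange n).filter fun j => j < i).map fun j => veq q (p j)) ++
      [vne q (p i)])
  -- `z₀ z₁ = vᵢ wᵢ`
  let matchi : Fin n → Fml σ ι ar := fun i =>
    bigAndL (((List.finRange k).map fun t => veq (z₀ t) (v i t)) ++
      ((List.finRange k).map fun t => veq (z₁ t) (w i t)))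
  -- `z₀ = z₁` and its negation
  let zeq : Fml σ ι ar := bigAndL ((List.finRange k).map fun t => veq (z₀ t) (z₁ t))
  let zne : Fml σ ι ar := bigOrL ((List.finRange k).map fun t => vne (z₀ t) (z₁ t))
  let body : Fml σ ι ar :=
    Fml.and
      (bigAndL ((List.finRange n).map fun i =>
        Fml.or (ncond i) (Fml.and (cond i) (matchi i))))
      (Fml.or zne (Fml.and zeq (Fml.dep i₀ fun t => Tm.var (z₀ t))))
  alls ((List.finRange n).map p ++ [q])
    (exs ((List.finRange k).map z₀ ++ (List.finRange k).map z₁)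
      (Fml.or nguard (Fml.and guard body)))

/-- The list of fresh variables used by `depUnion`. -/
def duFresh (n k : ℕ) (p : Fin n → ℕ) (q : ℕ) (z₀ z₁ : Fin k → ℕ) : List ℕ :=
  (List.finRange n).map p ++ [q] ++ (List.finRange k).map z₀ ++ (List.finRange k).map z₁

/-- The list of the variables in the tuples `v i`, `w i`. -/
def vwList (n k : ℕ) (v w : Fin n → Fin k → ℕ) : List ℕ :=
  (List.finRange n).foldr
    (fun i acc => (List.finRange k).map (v i) ++ (List.finRange k).map (w i) ++ acc) []

/-- Apply a quantifier prefix (`true` = universal, `false` = existential) to a formula. -/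
def applyPrefix {σ : Sig} {ι : Type} {ar : ι → ℕ} (pre : List (Bool × ℕ))
    (φ : Fml σ ι ar) : Fml σ ι ar :=
  pre.foldr (fun bv acc => match bv with
    | (true, x) => Fml.all x acc
    | (false, x) => Fml.ex x acc) φ

/-! Under a closed-world dependency only the active domain of `X(t)` matters. If every
value of `t` lies in `P`, this active domain is the same whether `X(t)` is read over `M`
or over `P`, so `⟨P, X(t)⟩ ∈ D` iff `⟨M, X(t)⟩ ∈ D`, and the atom `D t` together with the
first-order conjuncts `P tᵢ` defines `D^P t`. -/

lemma tsat_bigAndL {σ : Sig} {ι : Type} {ar : ι → ℕ} (𝒟 : ∀ i, DepOn (ar i)) {M : Type}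
    (𝔐 : Struc σ M) (l : List (Fml σ ι ar)) (X : Team M) :
    Fml.TSat 𝒟 𝔐 (bigAndL l) X ↔ ∀ φ ∈ l, Fml.TSat 𝒟 𝔐 φ X := by
  induction l with
  | nil => simp [bigAndL, Fml.TSat, Fml.verum]
  | cons φ l ih =>
    simp only [bigAndL, List.foldr_cons, Fml.TSat, List.forall_mem_cons] at ih ⊢
    rw [ih]

namespace DepOn

variable {k : ℕ} {D : DepOn k}

lemma IsoClosed.image_iff (hiso : D.IsoClosed) {M N : Type} (e : M ≃ N) (R : Set (Fin k → M)) :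
    D N ((fun xs => (⇑e) ∘ xs) '' R) ↔ D M R := by
  refine ⟨fun h => ?_, hiso M N e R⟩
  convert hiso N M e.symm _ h
  rw [Set.image_image]
  simp [Function.comp_def]

lemma ClosedWorld.iff_of_injective (hcw : D.ClosedWorld) (hiso : D.IsoClosed) {M N : Type}
    {f : N → M} (hf : Function.Injective f) {R : Set (Fin k → M)}
    (hR : ∀ xs ∈ R, ∀ i, xs i ∈ Set.range f) :
    D N {ys | f ∘ ys ∈ R} ↔ D M R := by
  set R' : Set (Fin k → N) := {ys | f ∘ ys ∈ R}
  let g : {n : N // ∃ ys ∈ R', ∃ i, ys i = n} → {m : M // ∃ xs ∈ R, ∃ i, xs i = m} :=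
    fun n => ⟨f n, by obtain ⟨ys, hys, i, hi⟩ := n.2; exact ⟨_, hys, i, congrArg f hi⟩⟩
  have hg : Function.Bijective g := by
    refine ⟨fun a b hab => Subtype.ext (hf (congrArg Subtype.val hab)), ?_⟩
    rintro ⟨_, xs, hxs, i, rfl⟩
    choose pre hpre using hR xs hxs
    have hpre_mem : pre ∈ R' := by
      change f ∘ pre ∈ R
      convert hxs using 1
      exact funext hpre
    exact ⟨⟨pre i, pre, hpre_mem, i, rfl⟩, Subtype.ext (hpre i)⟩
  set e := Equiv.ofBijective g hg
  rw [hcw N, hcw M, ← hiso.image_iff e]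
  congr! 1
  ext xs
  constructor
  · rintro ⟨ys, hys, rfl⟩
    exact hys
  · intro (hxs : (fun i => (xs i : M)) ∈ R)
    refine ⟨fun i => e.symm (xs i), ?_, funext fun i => e.apply_symm_apply (xs i)⟩
    show f ∘ (fun i => (e.symm (xs i) : N)) ∈ R
    convert hxs using 1
    funext i
    exact congrArg Subtype.val (e.apply_symm_apply (xs i))

end DepOn

def relativizedFml {σ : Sig} {k : ℕ} (P : σ.Rel 1) (t : Fin k → Tm σ) :
    Fml σ Unit (fun _ => k) :=
  Fml.and (bigAndL ((List.finRange k).map fun i => Fml.rel 1 P fun _ => t i)) (Fml.dep () t)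

lemma tsat_relativizedFml_iff {k : ℕ} {D : DepOn k} (hcw : D.ClosedWorld) (hiso : D.IsoClosed)
    {σ : Sig} (P : σ.Rel 1) (t : Fin k → Tm σ) {M : Type} (𝔐 : Struc σ M) (X : Team M) :
    Fml.TSat (fun _ : Unit => D) 𝔐 (relativizedFml P t) X ↔
      ((∀ s ∈ X, ∀ i, 𝔐.rel 1 P fun _ => (t i).eval 𝔐 s) ∧
        D {m : M // 𝔐.rel 1 P fun _ => m}
          {xs | ∃ s ∈ X, (fun i => (xs i : M)) = fun i => (t i).eval 𝔐 s}) := by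
  simp only [relativizedFml, Fml.TSat, tsat_bigAndL, List.forall_mem_map, List.mem_finRange,
    true_implies]
  rw [forall_comm]
  simp only [imp_forall_iff]
  refine and_congr_right fun hP => (hcw.iff_of_injective hiso Subtype.val_injective ?_).symm
  rintro xs ⟨s, hs, rfl⟩ i
  exact ⟨⟨_, hP s i hs⟩, rfl⟩

/-- Every closed-world dependency is relativizable; in fact, the
relativized atom `D^P t` is equivalent to `(⋀ᵢ P tᵢ) ∧ D t`. -/
theorem closed_world_relativizable (k : ℕ) (D : DepOn k)
    (hiso : D.IsoClosed) (hcw : D.ClosedWorld) :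
    D.Relativizable ∧
    ∀ (σ : Sig) (P : σ.Rel 1) (t : Fin k → Tm σ)
      (M : Type) (𝔐 : Struc σ M) (X : Team M),
      Fml.TSat (fun _ : Unit => D) 𝔐
          (Fml.and (bigAndL ((List.finRange k).map fun i => Fml.rel 1 P fun _ => t i))
            (Fml.dep () t)) X ↔
        ((∀ s ∈ X, ∀ i, 𝔐.rel 1 P fun _ => (t i).eval 𝔐 s) ∧
          D {m : M // 𝔐.rel 1 P fun _ => m}
            {xs | ∃ s ∈ X, (fun i => (xs i : M)) = fun i => (t i).eval 𝔐 s}) :=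
  ⟨fun _ P t => ⟨relativizedFml P t, fun _ => tsat_relativizedFml_iff hcw hiso P t⟩,
    fun _ P t _ 𝔐 X => tsat_relativizedFml_iff hcw hiso P t 𝔐 X⟩
end

section
/- Let φ be an FO(𝒟) formula where 𝒟 = {D₀, D₁, …} is a set of dependencies such that D₀ is downwards closed of arity k. Let S be a new k-ary relation symbol and let φ*(S) be obtained from φ by replacing a single occurrence D₀ t of the atom D₀ with S t. Then for all structures M whose signature contains that of φ and all teams X whose domain contains the free variables of φ: M ⊨_X φ if and only if there exists a relation S ⊆ M^k such that ⟨M,S⟩ ∈ D₀ and M ⊨_X φ*(S). -/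
/-! The occurrence `D₀ t` is evaluated on a single team `Y`, obtained from `X` along the path
from the root of `φ` to the atom; interpreting `S` as `Y(t)` turns `D₀ t` into `S t`.
Conversely, if `S t` holds on the team `Y` reached in `φ*`, then `Y(t) ⊆ S`, so `D₀` holds
on `Y(t)` by downward closure. The subformulas off that path do not mention `S`, so their
satisfaction does not depend on the interpretation of `S`. -/

section UpdRel

variable {σ : Sig} {M : Type} (𝔐 : Struc σ M) {k : ℕ} (S : σ.Rel k) (Q : Set (Fin k → M))

theorem Tm.eval_updRel (s : ℕ → M) : ∀ t : Tm σ, t.eval (𝔐.updRel S Q) s = t.eval 𝔐 s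
  | .var _ => rfl
  | .app _ f ts => congrArg (𝔐.fn _ f) (funext fun i => Tm.eval_updRel s (ts i))

theorem teamVals_updRel (X : Team M) {m : ℕ} (t : Fin m → Tm σ) :
    teamVals (𝔐.updRel S Q) X t = teamVals 𝔐 X t := by
  simp only [teamVals, Tm.eval_updRel]

theorem Struc.updRel_rel_self (xs : Fin k → M) : (𝔐.updRel S Q).rel k S xs ↔ xs ∈ Q := by
  simp [Struc.updRel]

theorem Struc.updRel_rel_of_ne {n : ℕ} {R : σ.Rel n} (hne : (⟨n, R⟩ : Σ n, σ.Rel n) ≠ ⟨k, S⟩)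
    (xs : Fin n → M) : (𝔐.updRel S Q).rel n R xs ↔ 𝔐.rel n R xs := by
  simp [Struc.updRel, hne]

theorem Fml.tsat_updRel_of_countRel_eq_zero {ι : Type} {ar : ι → ℕ} (𝒟 : ∀ i, DepOn (ar i))
    {ψ : Fml σ ι ar} (hψ : ψ.countRel ⟨k, S⟩ = 0) (X : Team M) :
    ψ.TSat 𝒟 (𝔐.updRel S Q) X ↔ ψ.TSat 𝒟 𝔐 X := by
  induction ψ generalizing X with
  | eq | neq => simp only [Fml.TSat, Tm.eval_updRel]
  | dep => simp only [Fml.TSat, teamVals_updRel]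
  | rel n R ts | nrel n R ts =>
    have hne : (⟨n, R⟩ : Σ n, σ.Rel n) ≠ ⟨k, S⟩ := fun he => by simp [Fml.countRel, he] at hψ
    simp only [Fml.TSat, Tm.eval_updRel, Struc.updRel_rel_of_ne 𝔐 S Q hne]
  | and φ ψ ihφ ihψ =>
    obtain ⟨hφ, hψ⟩ := Nat.add_eq_zero_iff.mp hψ
    exact and_congr (ihφ hφ X) (ihψ hψ X)
  | or φ ψ ihφ ihψ =>
    obtain ⟨hφ, hψ⟩ := Nat.add_eq_zero_iff.mp hψ
    exact exists₂_congr fun Y Z => and_congr_right' (and_congr (ihφ hφ Y) (ihψ hψ Z))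
  | ex v φ ih => exact exists_congr fun H => and_congr_right' (ih hψ _)
  | all v φ ih => exact ih hψ _

end UpdRel

namespace ReplOne

variable {σ : Sig} {ι : Type} {ar : ι → ℕ} {𝒟 : ∀ i, DepOn (ar i)} {i₀ : ι}
  {S : σ.Rel (ar i₀)} {φ φstar : Fml σ ι ar} {M : Type} {𝔐 : Struc σ M}

theorem exists_tsat_updRel_of_tsat (hrepl : ReplOne i₀ S φ φstar)
    (hnew : φ.countRel ⟨ar i₀, S⟩ = 0) {X : Team M} (h : φ.TSat 𝒟 𝔐 X) :
    ∃ Q, 𝒟 i₀ M Q ∧ φstar.TSat 𝒟 (𝔐.updRel S Q) X := by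
  induction hrepl generalizing X with
  | atom t =>
    exact ⟨teamVals 𝔐 X t, h, fun s hs => (Struc.updRel_rel_self 𝔐 S _ _).mpr
      ⟨s, hs, funext fun i => Tm.eval_updRel 𝔐 S _ s (t i)⟩⟩
  | andL _ ih =>
    obtain ⟨hφ, hψ⟩ := Nat.add_eq_zero_iff.mp hnew
    obtain ⟨Q, hQ, h'⟩ := ih hφ h.1
    exact ⟨Q, hQ, h', (Fml.tsat_updRel_of_countRel_eq_zero 𝔐 S Q 𝒟 hψ X).mpr h.2⟩
  | andR _ ih =>
    obtain ⟨hφ, hψ⟩ := Nat.add_eq_zero_iff.mp hnew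
    obtain ⟨Q, hQ, h'⟩ := ih hψ h.2
    exact ⟨Q, hQ, (Fml.tsat_updRel_of_countRel_eq_zero 𝔐 S Q 𝒟 hφ X).mpr h.1, h'⟩
  | orL _ ih =>
    obtain ⟨hφ, hψ⟩ := Nat.add_eq_zero_iff.mp hnew
    obtain ⟨Y, Z, rfl, hY, hZ⟩ := h
    obtain ⟨Q, hQ, hY'⟩ := ih hφ hY
    exact ⟨Q, hQ, Y, Z, rfl, hY', (Fml.tsat_updRel_of_countRel_eq_zero 𝔐 S Q 𝒟 hψ Z).mpr hZ⟩
  | orR _ ih =>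
    obtain ⟨hφ, hψ⟩ := Nat.add_eq_zero_iff.mp hnew
    obtain ⟨Y, Z, rfl, hY, hZ⟩ := h
    obtain ⟨Q, hQ, hZ'⟩ := ih hψ hZ
    exact ⟨Q, hQ, Y, Z, rfl, (Fml.tsat_updRel_of_countRel_eq_zero 𝔐 S Q 𝒟 hφ Y).mpr hY, hZ'⟩
  | exC _ ih =>
    obtain ⟨H, hH, h'⟩ := h
    obtain ⟨Q, hQ, h''⟩ := ih hnew h'
    exact ⟨Q, hQ, H, hH, h''⟩
  | allC _ ih => exact ih hnew h

theorem tsat_of_tsat_updRel (hrepl : ReplOne i₀ S φ φstar) (hdown : (𝒟 i₀).DownClosed)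
    (hnew : φ.countRel ⟨ar i₀, S⟩ = 0) {Q : Set (Fin (ar i₀) → M)} (hQ : 𝒟 i₀ M Q)
    {X : Team M} (h : φstar.TSat 𝒟 (𝔐.updRel S Q) X) : φ.TSat 𝒟 𝔐 X := by
  induction hrepl generalizing X with
  | atom t =>
    refine hdown M Q _ hQ ?_
    rintro _ ⟨s, hs, rfl⟩
    simpa only [Struc.updRel_rel_self, Tm.eval_updRel] using h s hs
  | andL _ ih =>
    obtain ⟨hφ, hψ⟩ := Nat.add_eq_zero_iff.mp hnew
    exact ⟨ih hφ h.1, (Fml.tsat_updRel_of_countRel_eq_zero 𝔐 S Q 𝒟 hψ X).mp h.2⟩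
  | andR _ ih =>
    obtain ⟨hφ, hψ⟩ := Nat.add_eq_zero_iff.mp hnew
    exact ⟨(Fml.tsat_updRel_of_countRel_eq_zero 𝔐 S Q 𝒟 hφ X).mp h.1, ih hψ h.2⟩
  | orL _ ih =>
    obtain ⟨hφ, hψ⟩ := Nat.add_eq_zero_iff.mp hnew
    obtain ⟨Y, Z, rfl, hY, hZ⟩ := h
    exact ⟨Y, Z, rfl, ih hφ hY, (Fml.tsat_updRel_of_countRel_eq_zero 𝔐 S Q 𝒟 hψ Z).mp hZ⟩
  | orR _ ih =>
    obtain ⟨hφ, hψ⟩ := Nat.add_eq_zero_iff.mp hnew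
    obtain ⟨Y, Z, rfl, hY, hZ⟩ := h
    exact ⟨Y, Z, rfl, (Fml.tsat_updRel_of_countRel_eq_zero 𝔐 S Q 𝒟 hφ Y).mp hY, ih hψ hZ⟩
  | exC _ ih =>
    obtain ⟨H, hH, h'⟩ := h
    exact ⟨H, hH, ih hnew h'⟩
  | allC _ ih => exact ih hnew h

end ReplOne

theorem extract_one_dependency_general (ι : Type) (ar : ι → ℕ) (𝒟 : ∀ i, DepOn (ar i))
    (σ : Sig) (i₀ : ι) (hdown : (𝒟 i₀).DownClosed)
    (S : σ.Rel (ar i₀)) (φ φstar : Fml σ ι ar)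
    (hrepl : ReplOne i₀ S φ φstar)
    (hnew : Fml.countRel (⟨ar i₀, S⟩ : Σ n, σ.Rel n) φ = 0)
    (M : Type) (𝔐 : Struc σ M) (X : Team M) :
    Fml.TSat 𝒟 𝔐 φ X ↔
      ∃ Q : Set (Fin (ar i₀) → M), 𝒟 i₀ M Q ∧
        Fml.TSat 𝒟 (𝔐.updRel S Q) φstar X :=
  ⟨hrepl.exists_tsat_updRel_of_tsat hnew,
    fun ⟨_, hQ, h⟩ => hrepl.tsat_of_tsat_updRel hdown hnew hQ h⟩

/-- Extracting a single occurrence of a downwards closed dependency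
atom: if `φ*` is obtained from `φ` by replacing a single occurrence of the atom
`D₀ t` by `S t` for a new relation symbol `S`, then `φ` holds in a team iff there is
a relation `Q` with `⟨M, Q⟩ ∈ D₀` such that `φ*` holds with `S` interpreted as `Q`. -/
theorem extract_one_dependency (ι : Type) (ar : ι → ℕ) (𝒟 : ∀ i, DepOn (ar i))
    (hiso : ∀ i, (𝒟 i).IsoClosed)
    (σ : Sig) (i₀ : ι) (hdown : (𝒟 i₀).DownClosed)
    (S : σ.Rel (ar i₀)) (φ φstar : Fml σ ι ar)
    (hrepl : ReplOne i₀ S φ φstar)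
    (hnew : Fml.countRel (⟨ar i₀, S⟩ : Σ n, σ.Rel n) φ = 0)
    (M : Type) (𝔐 : Struc σ M) (X : Team M) :
    Fml.TSat 𝒟 𝔐 φ X ↔
      ∃ Q : Set (Fin (ar i₀) → M), 𝒟 i₀ M Q ∧
        Fml.TSat 𝒟 (𝔐.updRel S Q) φstar X :=
  extract_one_dependency_general ι ar 𝒟 σ i₀ hdown S φ φstar hrepl hnew M 𝔐 X
end
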